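/- arXiv:2310.09455 — 3 statements merged into one kernel-verified Lean document; each statement's English description precedes it below -/
import Mathlib

section
/- Let G be a group in which every element of infinite order is conjugate to its square. Then G has property (NL): for every isometric action of G on a geodesic Gromov-hyperbolic metric space, no element of G is loxodromic. -/
noncomputable section

open Metric

/-- The Gromov product of `x` and `y` at `w` with respect to a distance function `d`. -/
def gromovProd {α : Type*} (d : α → α → ℝ) (w x y : α) : ℝ :=
  (d w x + d w y - d x y) / 2

/-- Gromov hyperbolicity via the four-point condition, for an arbitrary distance function. -/
def FourPointHyperbolic {α : Type*} (d : α → α → ℝ) : Prop :=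
  ∃ δ : ℝ, 0 ≤ δ ∧ ∀ w x y z : α,
    min (gromovProd d w x z) (gromovProd d w z y) - δ ≤ gromovProd d w x y

/-- A geodesic from `x` to `y`, parametrized by arc length on `[0, dist x y]`. -/
def IsGeodesicSeg {X : Type*} [MetricSpace X] (x y : X) (f : ℝ → X) : Prop :=
  f 0 = x ∧ f (dist x y) = y ∧
    ∀ s ∈ Set.Icc (0 : ℝ) (dist x y), ∀ t ∈ Set.Icc (0 : ℝ) (dist x y),
      dist (f s) (f t) = |s - t|

/-- A geodesic metric space: any two points are joined by a geodesic. -/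
def GeodesicSpace (X : Type*) [MetricSpace X] : Prop :=
  ∀ x y : X, ∃ f : ℝ → X, IsGeodesicSeg x y f

/-- The image (as a set) of a geodesic segment from `x` to `y`. -/
def geodSet {X : Type*} [MetricSpace X] (x y : X) (f : ℝ → X) : Set X :=
  f '' Set.Icc (0 : ℝ) (dist x y)

/-- `p` lies within distance `δ` of the set `S` (i.e. in the closed `δ`-neighborhood). -/
def WithinDistOf {X : Type*} [MetricSpace X] (δ : ℝ) (p : X) (S : Set X) : Prop :=
  ∃ q ∈ S, dist p q ≤ δ

/-- Rips condition: each side of every geodesic triangle is contained in the union of the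
closed `δ`-neighborhoods of the other two sides. -/
def RipsHyperbolic (X : Type*) [MetricSpace X] (δ : ℝ) : Prop :=
  ∀ x y z : X, ∀ fxy fyz fxz : ℝ → X,
    IsGeodesicSeg x y fxy → IsGeodesicSeg y z fyz → IsGeodesicSeg x z fxz →
      (∀ p ∈ geodSet x y fxy, WithinDistOf δ p (geodSet y z fyz ∪ geodSet x z fxz)) ∧
      (∀ p ∈ geodSet y z fyz, WithinDistOf δ p (geodSet x y fxy ∪ geodSet x z fxz)) ∧
      (∀ p ∈ geodSet x z fxz, WithinDistOf δ p (geodSet x y fxy ∪ geodSet y z fyz))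

/-- An (isometric) action of a group `G` on a metric space `X`. -/
structure IsIsomAction (G : Type*) [Group G] (X : Type*) [MetricSpace X]
    (act : G → X → X) : Prop where
  act_one : ∀ x : X, act 1 x = x
  act_mul : ∀ (g h : G) (x : X), act (g * h) x = act g (act h x)
  isometry : ∀ (g : G) (x y : X), dist (act g x) (act g y) = dist x y

/-- A cobounded action: some (hence any) orbit is coarsely dense. -/
def CoboundedAction {G X : Type*} [Group G] [MetricSpace X] (act : G → X → X) : Prop :=
  ∃ (x : X) (R : ℝ), 0 ≤ R ∧ ∀ y : X, ∃ g : G, dist y (act g x) ≤ R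

/-- A quasi-isometric embedding between two "spaces" given by distance functions. -/
def IsQIEmbWith {α β : Type*} (dα : α → α → ℝ) (dβ : β → β → ℝ) (f : α → β) : Prop :=
  ∃ A B : ℝ, 1 ≤ A ∧ 0 ≤ B ∧ ∀ x y : α,
    dα x y / A - B ≤ dβ (f x) (f y) ∧ dβ (f x) (f y) ≤ A * dα x y + B

/-- The image of `f` is coarsely dense. -/
def CoarselyDenseWith {α β : Type*} (dβ : β → β → ℝ) (f : α → β) : Prop :=
  ∃ C : ℝ, 0 ≤ C ∧ ∀ y : β, ∃ x : α, dβ (f x) y ≤ C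

/-- A quasi-isometry between two "spaces" given by distance functions. -/
def IsQuasiIsometryWith {α β : Type*} (dα : α → α → ℝ) (dβ : β → β → ℝ) (f : α → β) : Prop :=
  IsQIEmbWith dα dβ f ∧ CoarselyDenseWith dβ f

/-- The standard distance on `ℤ`. -/
def zdist : ℤ → ℤ → ℝ := fun m n => |(m : ℝ) - (n : ℝ)|

/-- `g` is loxodromic for the action `act`: for some basepoint `x`, the orbit map
`n ↦ g ^ n • x` is a quasi-isometric embedding of `ℤ`. -/
def LoxodromicWith {G α : Type*} [Group G] (d : α → α → ℝ) (act : G → α → α) (g : G) : Prop :=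
  ∃ x : α, IsQIEmbWith zdist d (fun n : ℤ => act (g ^ n) x)

/-- Acylindricity of an action, with respect to a distance function. -/
def AcylindricalWith {G α : Type*} (d : α → α → ℝ) (act : G → α → α) : Prop :=
  ∀ ε : ℝ, 0 < ε → ∃ (R : ℝ) (N : ℕ), 0 ≤ R ∧ ∀ x y : α, R ≤ d x y →
    {g : G | d x (act g x) ≤ ε ∧ d y (act g y) ≤ ε}.Finite ∧
    Nat.card {g : G | d x (act g x) ≤ ε ∧ d y (act g y) ≤ ε} ≤ N

/-- Two subsets are within finite Hausdorff distance of each other. -/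
def FinHausdorffClose {α : Type*} (d : α → α → ℝ) (A B : Set α) : Prop :=
  ∃ C : ℝ, (∀ a ∈ A, ∃ b ∈ B, d a b ≤ C) ∧ (∀ b ∈ B, ∃ a ∈ A, d a b ≤ C)

/-- The positive (`pos = true`) or negative (`pos = false`) orbit ray of `g` at `x`. -/
def orbitRay {G α : Type*} [Group G] (act : G → α → α) (g : G) (x : α) (pos : Bool) : Set α :=
  Set.range fun n : ℕ => act (g ^ (if pos then (n : ℤ) else -(n : ℤ))) x

/-- Independence of two loxodromic elements with respect to the basepoint `x`: no orbit ray of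
`g` is within finite Hausdorff distance of an orbit ray of `h`. -/
def IndepWith {G α : Type*} [Group G] (d : α → α → ℝ) (act : G → α → α) (x : α)
    (g h : G) : Prop :=
  ∀ s t : Bool, ¬ FinHausdorffClose d (orbitRay act g x s) (orbitRay act h x t)

/-- A group is virtually cyclic if it has a cyclic subgroup of finite index. -/
def VirtuallyCyclic (G : Type*) [Group G] : Prop :=
  ∃ H : Subgroup G, IsCyclic ↥H ∧ H.FiniteIndex

/-- `S` is a generating set of `G`. -/
def IsGenSet {G : Type*} [Group G] (S : Set G) : Prop :=
  Subgroup.closure S = ⊤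

/-- The word length of `g` with respect to `S`: the least `n` such that `g` is a product of
`n` elements of `S ∪ S⁻¹`. -/
def wordLength {G : Type*} [Group G] (S : Set G) (g : G) : ℕ :=
  sInf {n : ℕ | ∃ l : List G, l.length = n ∧ (∀ s ∈ l, s ∈ S ∨ s⁻¹ ∈ S) ∧ l.prod = g}

/-- The word metric `d_S(g,h) = ‖g⁻¹h‖_S` on `G`. -/
def wordDist {G : Type*} [Group G] (S : Set G) : G → G → ℝ :=
  fun g h => (wordLength S (g⁻¹ * h) : ℝ)

/-- `S ⪯ T` : `S` is dominated by `T`, i.e. `sup_{t ∈ T} ‖t‖_S < ∞`. -/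
def GenSetDominated {G : Type*} [Group G] (S T : Set G) : Prop :=
  ∃ M : ℕ, ∀ t ∈ T, wordLength S t ≤ M

/-- Equivalence of generating sets: mutual domination. -/
def GenSetEquiv {G : Type*} [Group G] (S T : Set G) : Prop :=
  GenSetDominated S T ∧ GenSetDominated T S

/-- The left multiplication action of a group on itself. -/
def leftTranslation {G : Type*} [Group G] : G → G → G := fun g x => g * x

universe uX uG

/-- A bundled isometric action of `G` on a geodesic, δ-hyperbolic (Rips condition)
metric space. -/
structure GrpActHypSpace (G : Type uG) [Group G] : Type (max uG (uX + 1)) where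
  carrier : Type uX
  [inst : MetricSpace carrier]
  act : G → carrier → carrier
  isIsomAction : IsIsomAction G carrier act
  δ : ℝ
  δ_nonneg : 0 ≤ δ
  geodesic : GeodesicSpace carrier
  rips : RipsHyperbolic carrier δ

attribute [instance] GrpActHypSpace.inst

/-- Property (NL): no isometric action of `G` on a geodesic Gromov-hyperbolic metric space
has a loxodromic element. -/
def PropNL (G : Type uG) [Group G] : Prop :=
  ∀ A : GrpActHypSpace.{uX, uG} G, ∀ g : G,
    ¬ LoxodromicWith (fun a b : A.carrier => dist a b) A.act g

/-! A loxodromic element `g` has infinite order, and its displacement `d(x, gⁿx)` grows at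
least linearly in `n`. If `c g c⁻¹ = g²`, then `g ^ 2 ^ n = cⁿ g c⁻ⁿ` moves `x` by at most
`d(x, gx) + 2n·d(x, cx)`: linear in `n`, whereas loxodromy forces growth like `2ⁿ`. -/

open Filter Asymptotics

theorem not_forall_pow_le_linear {r : ℝ} (hr : 1 < r) (a b : ℝ) :
    ¬ ∀ n : ℕ, r ^ n ≤ a * n + b := by
  intro h
  have hlin : (fun n : ℕ => a * n + b) =o[atTop] fun n => r ^ n := by
    have hone := isLittleO_pow_const_const_pow_of_one_lt (R := ℝ) 0 hr
    simp only [pow_zero] at hone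
    exact ((isLittleO_coe_const_pow_of_one_lt hr).const_mul_left a).add
      ((hone.const_mul_left b).congr_left (by simp))
  obtain ⟨n, hn⟩ := (hlin.def (by norm_num : (0 : ℝ) < 1 / 2)).exists
  have hpos : 0 < r ^ n := by positivity
  rw [Real.norm_eq_abs, Real.norm_of_nonneg hpos.le] at hn
  linarith [h n, le_abs_self (a * n + b)]

theorem conj_pow_eq_pow_pow_of_conj_eq_pow {G : Type*} [Group G] {c g : G} {k : ℕ}
    (hc : c * g * c⁻¹ = g ^ k) (n : ℕ) : c ^ n * g * (c ^ n)⁻¹ = g ^ k ^ n := by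
  induction n with
  | zero => simp
  | succ n ih =>
    calc c ^ (n + 1) * g * (c ^ (n + 1))⁻¹ = c * (c ^ n * g * (c ^ n)⁻¹) * c⁻¹ := by group
      _ = g ^ k ^ (n + 1) := by rw [ih, ← conj_pow, hc, ← pow_mul, pow_succ']

namespace IsIsomAction

variable {G X : Type*} [Group G] [MetricSpace X] {act : G → X → X}

theorem act_act_inv (hact : IsIsomAction G X act) (b : G) (x : X) : act b (act b⁻¹ x) = x := by
  rw [← hact.act_mul, mul_inv_cancel, hact.act_one]

theorem dist_act_inv (hact : IsIsomAction G X act) (b : G) (x : X) :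
    dist x (act b⁻¹ x) = dist x (act b x) := by
  rw [← hact.isometry b, hact.act_act_inv, dist_comm]

theorem dist_act_pow_le (hact : IsIsomAction G X act) (a : G) (x : X) (n : ℕ) :
    dist x (act (a ^ n) x) ≤ n * dist x (act a x) := by
  induction n with
  | zero => simp [hact.act_one]
  | succ n ih =>
    calc dist x (act (a ^ (n + 1)) x)
        ≤ dist x (act (a ^ n) x) + dist (act (a ^ n) x) (act (a ^ n) (act a x)) := by
          rw [pow_succ, hact.act_mul]
          exact dist_triangle _ _ _
      _ ≤ (n + 1 : ℕ) * dist x (act a x) := by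
          rw [hact.isometry]
          push_cast
          linarith

theorem dist_act_conj_le (hact : IsIsomAction G X act) (a b : G) (x : X) :
    dist x (act (b * a * b⁻¹) x) ≤ dist x (act a x) + 2 * dist x (act b x) := by
  set y := act b⁻¹ x with hy
  calc dist x (act (b * a * b⁻¹) x) = dist y (act a y) := by
        rw [hact.act_mul, hact.act_mul, ← hact.isometry b y, hy, hact.act_act_inv]
    _ ≤ dist y x + dist x (act a x) + dist (act a x) (act a y) := dist_triangle4 _ _ _ _
    _ = dist x (act a x) + 2 * dist x (act b x) := by
        rw [hact.isometry, dist_comm y x, hact.dist_act_inv]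
        ring

theorem exists_lower_bound_of_loxodromicWith (hact : IsIsomAction G X act) {g : G}
    (hg : LoxodromicWith dist act g) :
    ∃ (x : X) (A B : ℝ), 0 < A ∧ ∀ n : ℕ, n / A - B ≤ dist x (act (g ^ n) x) := by
  obtain ⟨x, A, B, hA, -, hq⟩ := hg
  refine ⟨x, A, B, by linarith, fun n => ?_⟩
  have hn := (hq n 0).1
  simp only [zdist, zpow_natCast, zpow_zero, hact.act_one, Int.cast_natCast, Int.cast_zero,
    sub_zero, Nat.abs_cast] at hn
  rwa [dist_comm] at hn

theorem not_isOfFinOrder_of_loxodromicWith (hact : IsIsomAction G X act) {g : G}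
    (hg : LoxodromicWith dist act g) : ¬ IsOfFinOrder g := by
  intro hfin
  obtain ⟨p, hp, hgp⟩ := isOfFinOrder_iff_pow_eq_one.mp hfin
  obtain ⟨x, A, B, hA, hlower⟩ := hact.exists_lower_bound_of_loxodromicWith hg
  obtain ⟨k, hk⟩ := exists_nat_gt (A * B)
  have hpk := hlower (p * k)
  rw [pow_mul, hgp, one_pow, hact.act_one, dist_self, sub_nonpos, div_le_iff₀ hA] at hpk
  have : (k : ℝ) ≤ (p * k : ℕ) := by exact_mod_cast Nat.le_mul_of_pos_left k hp
  linarith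

theorem not_loxodromicWith_of_conj_eq_pow (hact : IsIsomAction G X act) {c g : G} {k : ℕ}
    (hk : 2 ≤ k) (hc : c * g * c⁻¹ = g ^ k) : ¬ LoxodromicWith dist act g := by
  intro hg
  obtain ⟨x, A, B, hA, hlower⟩ := hact.exists_lower_bound_of_loxodromicWith hg
  apply not_forall_pow_le_linear (r := k) (by exact_mod_cast hk)
    (A * (2 * dist x (act c x))) (A * (dist x (act g x) + B))
  intro n
  have hupper : dist x (act (g ^ k ^ n) x) ≤ dist x (act g x) + 2 * (n * dist x (act c x)) := by
    rw [← conj_pow_eq_pow_pow_of_conj_eq_pow hc n]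
    linarith [hact.dist_act_conj_le g (c ^ n) x, hact.dist_act_pow_le c x n]
  have h := hlower (k ^ n)
  rw [div_sub' hA.ne', div_le_iff₀ hA] at h
  push_cast at h
  nlinarith [mul_le_mul_of_nonneg_left hupper hA.le]

end IsIsomAction

/-- if every infinite order element of `G` is conjugate to its square,
then `G` has property (NL). -/
theorem stmt_10 {G : Type uG} [Group G]
    (h : ∀ g : G, ¬ IsOfFinOrder g → IsConj g (g ^ 2)) :
    PropNL.{uX, uG} G := by
  intro A g hg
  obtain ⟨c, hc⟩ := isConj_iff.mp (h g (A.isIsomAction.not_isOfFinOrder_of_loxodromicWith hg))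
  exact A.isIsomAction.not_loxodromicWith_of_conj_eq_pow le_rfl hc hg
end
end

section
/- Every group with only finitely many conjugacy classes has property (NL): for every isometric action of such a group on a geodesic Gromov-hyperbolic metric space, no element is loxodromic. -/
noncomputable section

open Metric

universe uX uG

/-- a group with finitely many conjugacy classes has property (NL). -/
theorem stmt_11 {G : Type uG} [Group G] (h : Finite (ConjClasses G)) :
    PropNL.{uX, uG} G := by
  intro A g hlox
  obtain ⟨x, A0, B0, hA, hB, hqi⟩ := hlox
  have hiso := A.isIsomAction.isometry
  have hmul := A.isIsomAction.act_mul
  have hone := A.isIsomAction.act_one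
  have hx0 : A.act (g ^ (0:ℤ)) x = x := by simpa using hone x
  have hup : ∀ p : ℕ, dist x (A.act (g ^ p) x) ≤ A0 * p + B0 := by
    intro p
    have h2 := (hqi (p:ℤ) 0).2
    have hz : zdist (p:ℤ) 0 = (p:ℝ) := by simp [zdist]
    simpa [hz, zpow_natCast, dist_comm, hone] using h2
  have hlow : ∀ p : ℕ, (p:ℝ) / A0 - B0 ≤ dist x (A.act (g ^ p) x) := by
    intro p
    have h2 := (hqi (p:ℤ) 0).1
    have hz : zdist (p:ℤ) 0 = (p:ℝ) := by simp [zdist]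
    simpa [hz, zpow_natCast, dist_comm, hone] using h2
  obtain ⟨m, n, hmn, hconj⟩ :=
    Finite.exists_ne_map_eq_of_infinite (fun j : ℕ => ConjClasses.mk (g ^ (j+1)))
  rw [ConjClasses.mk_eq_mk_iff_isConj] at hconj
  obtain ⟨N, M, hN1, hNM, c, hc⟩ :
      ∃ N M : ℕ, 1 ≤ N ∧ N < M ∧ ∃ c : G, c * g ^ N * c⁻¹ = g ^ M := by
    rcases lt_or_gt_of_ne hmn with hlt | hlt
    · exact ⟨m+1, n+1, by omega, by omega, isConj_iff.mp hconj⟩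
    · exact ⟨n+1, m+1, by omega, by omega, isConj_iff.mp hconj.symm⟩
  have key : ∀ j : ℕ, g ^ (M ^ j) = c ^ j * g ^ (N ^ j) * (c ^ j)⁻¹ := by
    intro j
    induction j with
    | zero => simp
    | succ j ih =>
      calc g ^ M ^ (j+1) = (g ^ M ^ j) ^ M := by rw [← pow_mul, pow_succ]
        _ = (c ^ j * g ^ N ^ j * (c ^ j)⁻¹) ^ M := by rw [ih]
        _ = c ^ j * (g ^ N ^ j) ^ M * (c ^ j)⁻¹ := conj_pow
        _ = c ^ j * (g ^ M) ^ N ^ j * (c ^ j)⁻¹ := by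
              rw [← pow_mul, ← pow_mul, Nat.mul_comm]
        _ = c ^ j * (c * g ^ N * c⁻¹) ^ N ^ j * (c ^ j)⁻¹ := by rw [hc]
        _ = c ^ j * (c * (g ^ N) ^ N ^ j * c⁻¹) * (c ^ j)⁻¹ := by rw [conj_pow]
        _ = c ^ (j+1) * g ^ N ^ (j+1) * (c ^ (j+1))⁻¹ := by
              rw [← pow_mul, ← pow_succ']
              group
  set D := dist x (A.act c⁻¹ x) with hDdef
  have hDj : ∀ j : ℕ, dist x (A.act (c⁻¹ ^ j) x) ≤ j * D := by
    intro j
    induction j with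
    | zero => simp [hone]
    | succ j ih =>
      have e : A.act (c⁻¹ ^ (j+1)) x = A.act c⁻¹ (A.act (c⁻¹ ^ j) x) := by
        rw [pow_succ', hmul]
      calc dist x (A.act (c⁻¹ ^ (j+1)) x)
          ≤ dist x (A.act c⁻¹ x) + dist (A.act c⁻¹ x) (A.act (c⁻¹ ^ (j+1)) x) :=
            dist_triangle _ _ _
        _ = D + dist x (A.act (c⁻¹ ^ j) x) := by rw [e, hiso]
        _ ≤ D + j * D := by linarith
        _ = ((j+1 : ℕ) : ℝ) * D := by push_cast; ring
  have main : ∀ j : ℕ,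
      (M:ℝ) ^ j / A0 - B0 ≤ 2 * (j * D) + (A0 * (N:ℝ) ^ j + B0) := by
    intro j
    set y := A.act ((c ^ j)⁻¹) x with hy
    have e1 : A.act (g ^ M ^ j) x = A.act (c ^ j) (A.act (g ^ N ^ j) y) := by
      rw [key j, hmul, hmul]
    have hxy : A.act (c ^ j) y = x := by rw [hy, ← hmul, mul_inv_cancel, hone]
    have e2 : dist x (A.act (g ^ M ^ j) x) = dist y (A.act (g ^ N ^ j) y) := by
      calc dist x (A.act (g ^ M ^ j) x)
          = dist (A.act (c ^ j) y) (A.act (c ^ j) (A.act (g ^ N ^ j) y)) := by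
            rw [hxy, ← e1]
        _ = dist y (A.act (g ^ N ^ j) y) := hiso _ _ _
    have tri : dist y (A.act (g ^ N ^ j) y)
        ≤ 2 * dist x y + dist x (A.act (g ^ N ^ j) x) := by
      have t1 := dist_triangle y x (A.act (g ^ N ^ j) y)
      have t2 := dist_triangle x (A.act (g ^ N ^ j) x) (A.act (g ^ N ^ j) y)
      have t3 : dist (A.act (g ^ N ^ j) x) (A.act (g ^ N ^ j) y) = dist x y := hiso _ _ _
      rw [t3] at t2
      rw [dist_comm y x] at t1
      linarith
    have hdy : dist x y ≤ j * D := by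
      have hdj := hDj j
      rwa [inv_pow, ← hy] at hdj
    have hl := hlow (M ^ j)
    have hu := hup (N ^ j)
    have cM : ((M ^ j : ℕ) : ℝ) = (M:ℝ) ^ j := by push_cast; ring
    have cN : ((N ^ j : ℕ) : ℝ) = (N:ℝ) ^ j := by push_cast; ring
    rw [cM] at hl
    rw [cN] at hu
    rw [e2] at hl
    linarith
  have hA0 : 0 < A0 := lt_of_lt_of_le one_pos hA
  have hM1 : (1:ℝ) < (M:ℝ) := by exact_mod_cast (by omega : 1 < M)
  have hM0 : (0:ℝ) < (M:ℝ) := by linarith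
  have hD0 : 0 ≤ D := dist_nonneg
  have key2 : ∀ j : ℕ, (1:ℝ) ≤
      2*A0*D * ((j:ℝ) * ((M:ℝ))⁻¹ ^ j) + A0^2 * ((N:ℝ)/(M:ℝ)) ^ j
        + A0*(2*B0) * ((M:ℝ))⁻¹ ^ j := by
    intro j
    have hMj : (0:ℝ) < (M:ℝ) ^ j := pow_pos hM0 j
    have hm' : (M:ℝ) ^ j / A0 ≤ 2*((j:ℝ)*D) + A0*(N:ℝ)^j + 2*B0 := by
      have := main j; linarith
    have h1 : (M:ℝ) ^ j ≤ (2*((j:ℝ)*D) + A0*(N:ℝ)^j + 2*B0) * A0 :=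
      (div_le_iff₀ hA0).mp hm'
    have e : 2*A0*D * ((j:ℝ) * ((M:ℝ))⁻¹ ^ j) + A0^2 * ((N:ℝ)/(M:ℝ)) ^ j
          + A0*(2*B0) * ((M:ℝ))⁻¹ ^ j
        = ((2*((j:ℝ)*D) + A0*(N:ℝ)^j + 2*B0) * A0) / (M:ℝ) ^ j := by
      rw [div_pow, inv_pow]
      field_simp
    rw [e]
    exact (one_le_div hMj).mpr h1
  have hrN : (0:ℝ) ≤ (N:ℝ)/(M:ℝ) := by positivity
  have hrN1 : (N:ℝ)/(M:ℝ) < 1 := by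
    rw [div_lt_one hM0]
    exact_mod_cast hNM
  have hrM : (0:ℝ) ≤ ((M:ℝ))⁻¹ := by positivity
  have hrM1 : ((M:ℝ))⁻¹ < 1 := by
    rw [inv_lt_one_iff₀]
    right; exact hM1
  have T : Filter.Tendsto (fun j : ℕ =>
      2*A0*D * ((j:ℝ) * ((M:ℝ))⁻¹ ^ j) + A0^2 * ((N:ℝ)/(M:ℝ)) ^ j
        + A0*(2*B0) * ((M:ℝ))⁻¹ ^ j) Filter.atTop (nhds 0) := by
    have t1 := (tendsto_self_mul_const_pow_of_lt_one hrM hrM1).const_mul (2*A0*D)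
    have t2 := (tendsto_pow_atTop_nhds_zero_of_lt_one hrN hrN1).const_mul (A0^2)
    have t3 := (tendsto_pow_atTop_nhds_zero_of_lt_one hrM hrM1).const_mul (A0*(2*B0))
    have := (t1.add t2).add t3
    simpa using this
  have : (1:ℝ) ≤ 0 := ge_of_tendsto T (Filter.Eventually.of_forall key2)
  linarith
end
end

section
/- Let n ≥ 2 and let p, q : ℤⁿ → ℝ be group homomorphisms whose images are dense subgroups of ℝ. Then X_p = {g ∈ ℤⁿ : |p(g)| < 1} is a generating set of ℤⁿ, and X_p is equivalent to X_q (under mutual domination) if and only if q = λ·p for some nonzero real number λ. Consequently, for n ≥ 2 the group ℤⁿ admits at least 2^{ℵ₀} pairwise non-equivalent generating sets S for which (ℤⁿ, d_S) is quasi-isometric to ℝ. -/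
noncomputable section

open Metric

universe uX uG

/-- Word length for a subset of an additive group. -/
def addWordLength {A : Type*} [AddGroup A] (S : Set A) (a : A) : ℕ :=
  sInf {n : ℕ | ∃ l : List A, l.length = n ∧ (∀ s ∈ l, s ∈ S ∨ -s ∈ S) ∧ l.sum = a}

/-- The word metric on an additive group. -/
def addWordDist {A : Type*} [AddGroup A] (S : Set A) : A → A → ℝ :=
  fun a b => (addWordLength S (-a + b) : ℝ)

/-- `S ⪯ T` for subsets of an additive group. -/
def AddGenSetDominated {A : Type*} [AddGroup A] (S T : Set A) : Prop :=
  ∃ M : ℕ, ∀ t ∈ T, addWordLength S t ≤ M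

/-- Equivalence (mutual domination) of generating sets of an additive group. -/
def AddGenSetEquiv {A : Type*} [AddGroup A] (S T : Set A) : Prop :=
  AddGenSetDominated S T ∧ AddGenSetDominated T S

/-- Generating set of an additive group. -/
def IsAddGenSet {A : Type*} [AddGroup A] (S : Set A) : Prop :=
  AddSubgroup.closure S = ⊤

/-!
The word length of `g` with respect to `X_p = {g | |p g| < 1}` is comparable to `|p g|`: a
sum of `k` elements of `X_p` has `|p| ≤ k`, and conversely, because `p` has dense range, an
element with `|p g| < k + 1` can be peeled off one element of `X_p` at a time. Hence `p` is a
quasi-isometry `(A, d_{X_p}) → ℝ`, and `X_p ⪯ X_q` says exactly that `p` is bounded on `X_q`.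
If `p` is bounded on `X_q` and `q g₀ ∈ (0, 1)`, then `r = p - (p g₀ / q g₀) q` vanishes at
`g₀` and is bounded on `X_q`; every `b • h` can be corrected by a multiple of `g₀` into `X_q`
without changing `r`, so `|b| |r h|` is bounded and `r = 0`. For the continuum of classes,
take `g ↦ g i + t g j` with `t` irrational.
-/

section WordLength

variable {A : Type*} [AddGroup A] {S : Set A}

lemma addWordLength_list_sum_le {l : List A} (hl : ∀ s ∈ l, s ∈ S ∨ -s ∈ S) :
    addWordLength S l.sum ≤ l.length :=
  Nat.sInf_le ⟨l, rfl, hl, rfl⟩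

lemma addWordLength_le_one {s : A} (hs : s ∈ S) : addWordLength S s ≤ 1 := by
  simpa using addWordLength_list_sum_le (l := [s]) (by simp [hs])

lemma addGenSetEquiv_refl (S : Set A) : AddGenSetEquiv S S :=
  ⟨⟨1, fun _ => addWordLength_le_one⟩, ⟨1, fun _ => addWordLength_le_one⟩⟩

lemma exists_list_length_eq_addWordLength (hS : IsAddGenSet S) (g : A) :
    ∃ l : List A, l.length = addWordLength S g ∧ (∀ s ∈ l, s ∈ S ∨ -s ∈ S) ∧
      l.sum = g := by
  have hg : g ∈ (AddSubgroup.closure S).toAddSubmonoid := by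
    rw [hS]; exact AddSubgroup.mem_top g
  rw [AddSubgroup.closure_toAddSubmonoid] at hg
  obtain ⟨l, hl, hsum⟩ := AddSubmonoid.exists_list_of_mem_closure hg
  exact Nat.sInf_mem
    (s := {n | ∃ l : List A, l.length = n ∧ (∀ s ∈ l, s ∈ S ∨ -s ∈ S) ∧ l.sum = g})
    ⟨l.length, l, rfl, fun s hs => by simpa using hl s hs, hsum⟩

lemma abs_map_list_sum_le (f : A →+ ℝ) {C : ℝ} {l : List A} (hl : ∀ s ∈ l, |f s| ≤ C) :
    |f l.sum| ≤ C * l.length := by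
  induction l with
  | nil => simp
  | cons s l ih =>
    have hs := hl s List.mem_cons_self
    have hl' := ih fun t ht => hl t (List.mem_cons_of_mem s ht)
    calc |f (s :: l).sum| ≤ |f s| + |f l.sum| := by
          rw [List.sum_cons, map_add]; exact abs_add_le _ _
      _ ≤ C * (s :: l).length := by push_cast [List.length_cons]; linarith

lemma abs_le_mul_addWordLength (f : A →+ ℝ) {C : ℝ} (hC : ∀ s ∈ S, |f s| ≤ C)
    (hS : IsAddGenSet S) (g : A) : |f g| ≤ C * addWordLength S g := by
  obtain ⟨l, hlen, hl, rfl⟩ := exists_list_length_eq_addWordLength hS g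
  rw [← hlen]
  refine abs_map_list_sum_le f fun s hs => ?_
  rcases hl s hs with h | h
  · exact hC s h
  · simpa using hC (-s) h

end WordLength

section DenseRange

variable {A : Type*} [AddGroup A] {p : A →+ ℝ}

lemma exists_list_sum_eq_of_abs_lt (hp : Dense (Set.range p)) (N : ℕ) {g : A}
    (hg : |p g| < N + 1) :
    ∃ l : List A, l.length = N + 1 ∧ (∀ s ∈ l, |p s| < 1) ∧ l.sum = g := by
  induction N generalizing g with
  | zero => exact ⟨[g], rfl, by simpa using hg, by simp⟩
  | succ N ih =>
    -- the conditions `|p h| < 1` and `|p (-h + g)| < N + 1` define a nonempty open interval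
    have hlt : max (-1) (p g - (N + 1)) < min 1 (p g + (N + 1)) := by
      push_cast at hg
      rw [abs_lt] at hg
      refine max_lt (lt_min ?_ ?_) (lt_min ?_ ?_) <;> linarith
    obtain ⟨_, ⟨h, rfl⟩, hlo, hhi⟩ := hp.exists_between hlt
    rw [max_lt_iff] at hlo
    rw [lt_min_iff] at hhi
    obtain ⟨l, hlen, hl, hsum⟩ := ih (g := -h + g) (by
      rw [map_add, map_neg, abs_lt]; constructor <;> linarith)
    refine ⟨h :: l, by simp [hlen], ?_, by simp [hsum]⟩
    simp only [List.mem_cons, forall_eq_or_imp]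
    exact ⟨abs_lt.2 ⟨hlo.1, hhi.1⟩, hl⟩

lemma isAddGenSet_of_dense (hp : Dense (Set.range p)) : IsAddGenSet {g | |p g| < 1} := by
  refine eq_top_iff.2 fun g _ => ?_
  obtain ⟨l, -, hl, rfl⟩ :=
    exists_list_sum_eq_of_abs_lt hp ⌊|p g|⌋₊ (Nat.lt_floor_add_one _)
  exact AddSubgroup.list_sum_mem _ fun s hs => AddSubgroup.subset_closure (hl s hs)

lemma addWordLength_le_of_abs_lt (hp : Dense (Set.range p)) {N : ℕ} {g : A}
    (hg : |p g| < N + 1) : addWordLength {g | |p g| < 1} g ≤ N + 1 := by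
  obtain ⟨l, hlen, hl, rfl⟩ := exists_list_sum_eq_of_abs_lt hp N hg
  exact hlen ▸ addWordLength_list_sum_le fun s hs => Or.inl (hl s hs)

lemma addWordLength_le_abs_add_one (hp : Dense (Set.range p)) (g : A) :
    (addWordLength {g | |p g| < 1} g : ℝ) ≤ |p g| + 1 := by
  have h := addWordLength_le_of_abs_lt hp (Nat.lt_floor_add_one |p g|)
  calc (addWordLength {g | |p g| < 1} g : ℝ) ≤ (⌊|p g|⌋₊ + 1 : ℕ) := by exact_mod_cast h
    _ ≤ |p g| + 1 := by push_cast; linarith [Nat.floor_le (abs_nonneg (p g))]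

lemma abs_le_addWordLength (hp : Dense (Set.range p)) (g : A) :
    |p g| ≤ addWordLength {g | |p g| < 1} g := by
  simpa only [one_mul] using
    abs_le_mul_addWordLength (S := {g | |p g| < 1}) p (fun _ hs => hs.le)
      (isAddGenSet_of_dense hp) g

lemma isQuasiIsometryWith_of_dense (hp : Dense (Set.range p)) :
    IsQuasiIsometryWith (addWordDist {g | |p g| < 1}) (fun a b : ℝ => dist a b) p := by
  have hdist (x y : A) : dist (p x) (p y) = |p (-x + y)| := by
    rw [Real.dist_eq, map_add, map_neg, abs_sub_comm, neg_add_eq_sub]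
  refine ⟨⟨1, 1, le_rfl, zero_le_one, fun x y => ?_⟩, ⟨1, zero_le_one, fun y => ?_⟩⟩
  · have hle := abs_le_addWordLength hp (-x + y)
    have hge := addWordLength_le_abs_add_one hp (-x + y)
    simp only [addWordDist, hdist, div_one, one_mul]
    constructor <;> linarith
  · obtain ⟨_, ⟨g, rfl⟩, hg⟩ := Metric.mem_closure_iff.1 (hp y) 1 one_pos
    exact ⟨g, (dist_comm (p g) y).trans_le hg.le⟩

lemma addGenSetDominated_iff_exists_abs_le (hp : Dense (Set.range p)) (q : A →+ ℝ) :
    AddGenSetDominated {g | |p g| < 1} {g | |q g| < 1} ↔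
      ∃ M : ℝ, ∀ g, |q g| < 1 → |p g| ≤ M := by
  constructor
  · rintro ⟨M, hM⟩
    exact ⟨M, fun g hg => (abs_le_addWordLength hp g).trans (by exact_mod_cast hM g hg)⟩
  · rintro ⟨M, hM⟩
    refine ⟨⌊M⌋₊ + 1, fun g hg => addWordLength_le_of_abs_lt hp ?_⟩
    exact (hM g hg).trans_lt (by exact_mod_cast Nat.lt_floor_add_one M)

end DenseRange

lemma exists_int_abs_mul_add_lt {c : ℝ} (hc : 0 < c) (y : ℝ) :
    ∃ a : ℤ, |a * c + y| < c := by
  refine ⟨-⌊y / c⌋, ?_⟩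
  have hfract : ((-⌊y / c⌋ : ℤ) : ℝ) * c + y = c * Int.fract (y / c) := by
    rw [Int.fract]; push_cast; field_simp; ring
  rw [hfract, abs_of_nonneg (mul_nonneg hc.le (Int.fract_nonneg _))]
  exact mul_lt_of_lt_one_right hc (Int.fract_lt_one _)

section Rigidity

variable {A : Type*} [AddGroup A] {p q : A →+ ℝ}

lemma exists_eq_mul_of_abs_le (hq : Dense (Set.range q)) {M : ℝ}
    (hM : ∀ g, |q g| < 1 → |p g| ≤ M) :
    ∃ μ : ℝ, ∀ g, p g = μ * q g := by
  obtain ⟨_, ⟨g₀, rfl⟩, hq₀, hq₁⟩ := hq.exists_between zero_lt_one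
  set μ := p g₀ / q g₀
  refine ⟨μ, fun h => ?_⟩
  -- some `a • g₀ + b • h` lies in `{|q| < 1}`, and `p - μ q` vanishes at `g₀`
  have hbound (b : ℤ) : |(b : ℝ)| * |p h - μ * q h| ≤ M + |μ| := by
    obtain ⟨a, ha⟩ := exists_int_abs_mul_add_lt hq₀ (b * q h)
    set x := a • g₀ + b • h
    have hqx : q x = a * q g₀ + b * q h := by simp [x]
    have hpx : p x - μ * q x = b * (p h - μ * q h) := by
      rw [hqx]; simp only [x, map_add, map_zsmul, zsmul_eq_mul, μ]; field_simp; ring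
    have hx : |q x| < 1 := hqx ▸ ha.trans hq₁
    calc |(b : ℝ)| * |p h - μ * q h| = |p x - μ * q x| := by rw [hpx, abs_mul]
      _ ≤ |p x| + |μ| * |q x| := by rw [← abs_mul]; exact abs_sub _ _
      _ ≤ M + |μ| := add_le_add (hM x hx) (mul_le_of_le_one_right (abs_nonneg μ) hx.le)
  by_contra hne
  have hpos : 0 < |p h - μ * q h| := abs_pos.2 (sub_ne_zero.2 hne)
  obtain ⟨N, hN⟩ := exists_nat_gt ((M + |μ|) / |p h - μ * q h|)
  have hN' := hbound N
  rw [Int.cast_natCast, Nat.abs_cast, ← le_div_iff₀ hpos] at hN'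
  linarith

lemma addGenSetEquiv_iff_exists_eq_mul (hp : Dense (Set.range p)) (hq : Dense (Set.range q)) :
    AddGenSetEquiv {g | |p g| < 1} {g | |q g| < 1} ↔
      ∃ lam : ℝ, lam ≠ 0 ∧ ∀ g, q g = lam * p g := by
  rw [AddGenSetEquiv, addGenSetDominated_iff_exists_abs_le hp,
    addGenSetDominated_iff_exists_abs_le hq]
  constructor
  · rintro ⟨⟨M, hM⟩, -⟩
    obtain ⟨μ, hμ⟩ := exists_eq_mul_of_abs_le hq hM
    obtain ⟨_, ⟨g, rfl⟩, hg, -⟩ := hp.exists_between zero_lt_one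
    have hμ0 : μ ≠ 0 := by rintro rfl; simp [hμ g] at hg
    exact ⟨μ⁻¹, inv_ne_zero hμ0, fun g => by rw [hμ g, inv_mul_cancel_left₀ hμ0]⟩
  · rintro ⟨lam, hlam, hqp⟩
    have hl : 0 < |lam| := abs_pos.2 hlam
    refine ⟨⟨1 / |lam|, fun g hg => ?_⟩, ⟨|lam|, fun g hg => ?_⟩⟩
    · rw [hqp, abs_mul] at hg
      rw [le_div_iff₀ hl, mul_comm]
      exact hg.le
    · rw [hqp, abs_mul]
      exact mul_le_of_le_one_right hl.le hg.le

end Rigidity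

lemma continuum_le_mk_irrational : Cardinal.continuum ≤ Cardinal.mk {t : ℝ | Irrational t} := by
  have hcompl : {t : ℝ | Irrational t} = (Set.range ((↑) : ℚ → ℝ))ᶜ := rfl
  have hℚ : Cardinal.mk (Set.range ((↑) : ℚ → ℝ)) < Cardinal.mk ℝ := by
    rw [Cardinal.mk_real]
    exact Cardinal.mk_range_le.trans_lt
      (Cardinal.mk_denumerable ℚ ▸ Cardinal.aleph0_lt_continuum)
  rw [hcompl, Cardinal.mk_compl_of_infinite _ hℚ, Cardinal.mk_real]

def slopeHom {ι : Type*} (i j : ι) (t : ℝ) : (ι → ℤ) →+ ℝ :=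
  AddMonoidHom.mk' (fun g => g i + t * g j) fun g h => by push_cast [Pi.add_apply]; ring

section Slope

variable {ι : Type*} [DecidableEq ι] {i j : ι}

lemma slopeHom_single_left (hij : i ≠ j) (t : ℝ) : slopeHom i j t (Pi.single i 1) = 1 := by
  simp [slopeHom, hij.symm]

lemma slopeHom_single_right (hij : i ≠ j) (t : ℝ) : slopeHom i j t (Pi.single j 1) = t := by
  simp [slopeHom, hij]

lemma dense_range_slopeHom (hij : i ≠ j) {t : ℝ} (ht : Irrational t) :
    Dense (Set.range (slopeHom i j t)) := by
  have hsub : (AddSubgroup.closure {t, 1} : Set ℝ) ⊆ Set.range (slopeHom i j t) := by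
    rw [← AddMonoidHom.coe_range, SetLike.coe_subset_coe, AddSubgroup.closure_le,
      Set.insert_subset_iff, Set.singleton_subset_iff]
    exact ⟨⟨_, slopeHom_single_right hij t⟩, ⟨_, slopeHom_single_left hij t⟩⟩
  exact (dense_addSubgroupClosure_pair_iff.2 (by simpa using ht)).mono hsub

lemma eq_of_addGenSetEquiv_slopeHom (hij : i ≠ j) {t t' : ℝ} (ht : Irrational t)
    (ht' : Irrational t')
    (h : AddGenSetEquiv {g | |slopeHom i j t g| < 1} {g | |slopeHom i j t' g| < 1}) :
    t = t' := by
  obtain ⟨lam, -, hlam⟩ := (addGenSetEquiv_iff_exists_eq_mul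
    (dense_range_slopeHom hij ht) (dense_range_slopeHom hij ht')).1 h
  have h₁ := hlam (Pi.single i 1)
  have h₂ := hlam (Pi.single j 1)
  rw [slopeHom_single_left hij, slopeHom_single_left hij, mul_one] at h₁
  rw [slopeHom_single_right hij, slopeHom_single_right hij, ← h₁, one_mul] at h₂
  exact h₂.symm

lemma exists_continuum_inequivalent_genSets_quasiIsometric_real (hij : i ≠ j) :
    ∃ F : Set (Set (ι → ℤ)), Cardinal.continuum ≤ Cardinal.mk F ∧
      (F.Pairwise fun S T => ¬ AddGenSetEquiv S T) ∧
      ∀ S ∈ F, IsAddGenSet S ∧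
        ∃ f : (ι → ℤ) → ℝ,
          IsQuasiIsometryWith (addWordDist S) (fun a b : ℝ => dist a b) f := by
  set X : ℝ → Set (ι → ℤ) := fun t => {g | |slopeHom i j t g| < 1}
  have hX : Set.InjOn X {t | Irrational t} := fun t ht t' ht' h =>
    eq_of_addGenSetEquiv_slopeHom hij ht ht' (show AddGenSetEquiv (X t) (X t') from
      h ▸ addGenSetEquiv_refl (X t))
  refine ⟨X '' {t | Irrational t}, ?_, ?_, ?_⟩
  · rw [← Cardinal.lift_le.{0}, Cardinal.lift_continuum,
      Cardinal.mk_image_eq_of_injOn_lift _ _ hX]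
    exact Cardinal.lift_continuum.ge.trans (Cardinal.lift_le.2 continuum_le_mk_irrational)
  · rintro _ ⟨t, ht, rfl⟩ _ ⟨t', ht', rfl⟩ hne h
    exact hne (congrArg X (eq_of_addGenSetEquiv_slopeHom hij ht ht' h))
  · rintro _ ⟨t, ht, rfl⟩
    exact ⟨isAddGenSet_of_dense (dense_range_slopeHom hij ht), _,
      isQuasiIsometryWith_of_dense (dense_range_slopeHom hij ht)⟩

end Slope

/-- lineal structures on `ℤⁿ` coming from homomorphisms to `ℝ` with dense
image, and the resulting `2^{ℵ₀}` inequivalent generating sets quasi-isometric to `ℝ`. -/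
theorem stmt_15 (n : ℕ) (hn : 2 ≤ n) (p q : (Fin n → ℤ) →+ ℝ)
    (hp : Dense (Set.range fun g => p g)) (hq : Dense (Set.range fun g => q g)) :
    IsAddGenSet {g : Fin n → ℤ | |p g| < 1} ∧
    (AddGenSetEquiv {g : Fin n → ℤ | |p g| < 1} {g : Fin n → ℤ | |q g| < 1} ↔
      ∃ lam : ℝ, lam ≠ 0 ∧ ∀ g : Fin n → ℤ, q g = lam * p g) ∧
    ∃ F : Set (Set (Fin n → ℤ)), Cardinal.continuum ≤ Cardinal.mk F ∧
      (F.Pairwise fun S T => ¬ AddGenSetEquiv S T) ∧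
      ∀ S ∈ F, IsAddGenSet S ∧
        ∃ f : (Fin n → ℤ) → ℝ, IsQuasiIsometryWith (addWordDist S) (fun a b : ℝ => dist a b) f := by
  have h01 : (⟨0, by omega⟩ : Fin n) ≠ ⟨1, by omega⟩ := by simp [Fin.ext_iff]
  exact ⟨isAddGenSet_of_dense hp, addGenSetEquiv_iff_exists_eq_mul hp hq,
    exists_continuum_inequivalent_genSets_quasiIsometric_real h01⟩
end
end
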